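/- Let Φ ⊂ (0,1] be a set of rationals and define 𝔖_Φ = { (m-1)/m + Σ_i l_i b_i / m : m ∈ ℤ_{>0} ∪ {∞}, l_i ∈ ℤ_{≥0}, b_i ∈ Φ } ∩ [0,1]. If Φ satisfies the descending chain condition (DCC), then 𝔖_Φ also satisfies the DCC. -/

import Mathlib

/-- A set of rationals satisfies the descending chain condition if it contains no
infinite strictly decreasing sequence. -/
def SatisfiesDCC (S : Set ℚ) : Prop :=
  ¬ ∃ f : ℕ → ℚ, (∀ n, f n ∈ S) ∧ StrictAnti f

/-- The coefficient set `𝔖_Φ = {(m-1)/m + ∑ l_i b_i/m ≤ 1 : m ∈ ℤ_{>0} ∪ {∞},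
l_i ∈ ℤ_{≥0}, b_i ∈ Φ}`, where for `m = ∞` the expression is interpreted as `1`. -/
def SCoeffSet (Φ : Set ℚ) : Set ℚ :=
  {x | x ≤ 1 ∧ (x = 1 ∨ ∃ (m : ℕ), 0 < m ∧ ∃ (n : ℕ) (l : Fin n → ℕ) (b : Fin n → ℚ),
    (∀ i, b i ∈ Φ) ∧ x = ((m : ℚ) - 1) / m + (∑ i, (l i : ℚ) * b i) / m)}

/-!
Write an element `x ≠ 1` of `𝔖_Φ` as `1 - (1 - s)/m` with `s` in the additive monoid generated
by `Φ`; the bound `x ≤ 1` forces `s ≤ 1`, which makes `1 - (1 - s)/m` monotone in the pair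
`(m, s)` for the product order. Both `ℕ` and the monoid generated by a well-ordered set of
nonnegative numbers are partially well-ordered (Higman), so `𝔖_Φ` is the image of a partially
well-ordered set under a monotone map, plus the point `1`.
-/

theorem satisfiesDCC_iff_isWF (S : Set ℚ) : SatisfiesDCC S ↔ S.IsWF := by
  rw [Set.isWF_iff_no_descending_seq, SatisfiesDCC]
  exact ⟨fun h f hf hS => h ⟨f, hS, hf⟩, fun h ⟨f, hS, hf⟩ => h f hf hS⟩

def adjunctionCoeff (p : ℕ × ℚ) : ℚ :=
  ((p.1 : ℚ) - 1) / p.1 + p.2 / p.1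

theorem adjunctionCoeff_eq {m : ℕ} (hm : 1 ≤ m) (s : ℚ) :
    adjunctionCoeff (m, s) = 1 - (1 - s) / m := by
  have : (m : ℚ) ≠ 0 := by positivity
  simp only [adjunctionCoeff]
  field_simp
  ring

theorem monotoneOn_adjunctionCoeff :
    MonotoneOn adjunctionCoeff (Set.Ici 1 ×ˢ Set.Iic 1) := by
  rintro ⟨m, s⟩ ⟨hm, hs⟩ ⟨m', s'⟩ ⟨hm', -⟩ ⟨hmm', hss'⟩
  simp only [Set.mem_Ici, Set.mem_Iic] at hm hm' hs hmm' hss'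
  rw [adjunctionCoeff_eq hm, adjunctionCoeff_eq hm', sub_le_sub_iff_left]
  calc (1 - s') / m' ≤ (1 - s) / m' := by gcongr
    _ ≤ (1 - s) / m := by gcongr

theorem SCoeffSet_subset_insert_image_adjunctionCoeff (Φ : Set ℚ) :
    SCoeffSet Φ ⊆ insert 1 (adjunctionCoeff ''
      (Set.Ici 1 ×ˢ ((AddSubmonoid.closure Φ : Set ℚ) ∩ Set.Iic 1))) := by
  rintro x ⟨hx1, rfl | ⟨m, hm, n, l, b, hb, rfl⟩⟩
  · exact Set.mem_insert 1 _
  refine Set.mem_insert_of_mem 1 ⟨(m, ∑ i, (l i : ℚ) * b i), ⟨hm, ?_, ?_⟩, rfl⟩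
  · simp_rw [← nsmul_eq_mul]
    exact sum_mem fun i _ => nsmul_mem (AddSubmonoid.subset_closure (hb i)) _
  · change adjunctionCoeff (m, _) ≤ 1 at hx1
    have hm_pos : (0 : ℚ) < m := by exact_mod_cast hm
    rwa [adjunctionCoeff_eq hm, sub_le_self_iff, le_div_iff₀ hm_pos, zero_mul, sub_nonneg] at hx1

/-- If `Φ ⊂ (0,1] ∩ ℚ` satisfies the DCC, then so does `𝔖_Φ`. -/
theorem stmt14 (Φ : Set ℚ) (hΦ : Φ ⊆ Set.Ioc 0 1) (hdcc : SatisfiesDCC Φ) :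
    SatisfiesDCC (SCoeffSet Φ) := by
  rw [satisfiesDCC_iff_isWF] at hdcc ⊢
  have hsums : (AddSubmonoid.closure Φ : Set ℚ).IsPWO :=
    hdcc.isPWO.addSubmonoid_closure fun x hx => (hΦ hx).1.le
  have hdomain : (Set.Ici 1 ×ˢ ((AddSubmonoid.closure Φ : Set ℚ) ∩ Set.Iic 1)).IsPWO :=
    (Set.IsPWO.of_linearOrder _).prod (hsums.mono Set.inter_subset_left)
  refine ((hdomain.image_of_monotoneOn ?_).insert 1).isWF.subset (SCoeffSet_subset_insert_image_adjunctionCoeff Φ)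
  exact monotoneOn_adjunctionCoeff.mono (Set.prod_mono le_rfl Set.inter_subset_right)
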